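/- Let A = P_k + S_k for k = 1,…,m, where each P_k is positive definite (Hermitian part positive definite) and each S_k is skew-Hermitian, let α_k > 0, and set M(α_k) = (α_kI + S_k)^{-1}(α_kI - P_k)(α_kI + P_k)^{-1}(α_kI - S_k). Then ρ(M(α_k)) ≤ ‖(α_kI - P_k)(α_kI + P_k)^{-1}‖₂ < 1. -/

import Mathlib

/-!
If `Re ⟪x, B x⟫ ≥ 0` and `α > 0`, the identity
`‖α x + B x‖² = ‖α x - B x‖² + 4 α Re ⟪x, B x⟫` shows that `α + B` is invertible and that the
Cayley transform `C_B = (α - B)(α + B)⁻¹` is a contraction; it is a strict contraction when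
`Re ⟪x, B x⟫ > 0` for `x ≠ 0`, uniformly so by compactness of the unit sphere. Conjugating by
`α + S` turns `M(α)` into `C_P C_S`, and `Re ⟪x, S x⟫ = 0` makes `C_S` a contraction, so
`ρ(M(α)) ≤ ‖C_P C_S‖ ≤ ‖C_P‖ < 1`.
-/
open Matrix
open scoped ComplexOrder Matrix.Norms.L2Operator

open RCLike
open scoped InnerProductSpace

section InnerProductSpace

variable {𝕜 E : Type*} [RCLike 𝕜] [NormedAddCommGroup E] [InnerProductSpace 𝕜 E]

theorem norm_ofReal_smul_add_sq (α : ℝ) (x y : E) :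
    ‖(α : 𝕜) • x + y‖ ^ 2 = ‖(α : 𝕜) • x - y‖ ^ 2 + 4 * α * re ⟪x, y⟫_𝕜 := by
  rw [norm_add_sq (𝕜 := 𝕜), norm_sub_sq (𝕜 := 𝕜), inner_smul_real_left, smul_re]
  ring

theorem norm_ofReal_smul_sub_le_norm_add {α : ℝ} (hα : 0 ≤ α) {x y : E}
    (h : 0 ≤ re ⟪x, y⟫_𝕜) : ‖(α : 𝕜) • x - y‖ ≤ ‖(α : 𝕜) • x + y‖ := by
  refine pow_le_pow_iff_left₀ (norm_nonneg _) (norm_nonneg _) two_ne_zero |>.mp ?_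
  rw [norm_ofReal_smul_add_sq]
  linarith [mul_nonneg hα h]

theorem norm_ofReal_smul_sub_lt_norm_add {α : ℝ} (hα : 0 < α) {x y : E}
    (h : 0 < re ⟪x, y⟫_𝕜) : ‖(α : 𝕜) • x - y‖ < ‖(α : 𝕜) • x + y‖ := by
  refine pow_lt_pow_iff_left₀ (norm_nonneg _) (norm_nonneg _) two_ne_zero |>.mp ?_
  rw [norm_ofReal_smul_add_sq]
  linarith [mul_pos hα h]

-- In finite dimension the operator norm is a maximum over the compact unit sphere.
theorem ContinuousLinearMap.norm_lt_one_of_norm_apply_lt [FiniteDimensional 𝕜 E]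
    (f : E →L[𝕜] E) (h : ∀ x, x ≠ 0 → ‖f x‖ < ‖x‖) : ‖f‖ < 1 := by
  rcases subsingleton_or_nontrivial E with hE | hE
  · simp [Subsingleton.elim f 0]
  have := FiniteDimensional.proper_rclike 𝕜 E
  have : NormedSpace ℝ E := NormedSpace.restrictScalars ℝ 𝕜 E
  rw [← f.sSup_sphere_eq_norm, (isCompact_sphere 0 1).sSup_lt_iff_of_continuous
    (NormedSpace.sphere_nonempty.mpr zero_le_one) (by fun_prop)]
  intro x hx
  rw [mem_sphere_zero_iff_norm] at hx
  simpa [hx] using h x (ne_zero_of_norm_ne_zero (by simp [hx]))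

end InnerProductSpace

theorem spectralRadius_mul_comm {𝕜 A : Type*} [NormedField 𝕜] [Ring A] [Algebra 𝕜 A]
    (a b : A) : spectralRadius 𝕜 (a * b) = spectralRadius 𝕜 (b * a) := by
  suffices key : ∀ a b : A, spectralRadius 𝕜 (a * b) ≤ spectralRadius 𝕜 (b * a) from
    le_antisymm (key a b) (key b a)
  intro a b
  refine iSup₂_le fun z hz => ?_
  rcases eq_or_ne z 0 with rfl | hz0
  · simp
  have hz' : z ∈ spectrum 𝕜 (b * a) \ {0} := spectrum.nonzero_mul_comm (𝕜 := 𝕜) a b ▸ ⟨hz, hz0⟩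
  exact le_iSup₂ (f := fun (z : 𝕜) (_ : z ∈ spectrum 𝕜 (b * a)) => (‖z‖₊ : ENNReal)) z hz'.1

namespace Matrix

variable {𝕜 ι : Type*} [RCLike 𝕜] [Fintype ι] [DecidableEq ι]

local notation "L" => toEuclideanCLM (𝕜 := 𝕜) (n := ι)

noncomputable def cayley (α : ℝ) (B : Matrix ι ι 𝕜) : Matrix ι ι 𝕜 :=
  ((α : 𝕜) • 1 - B) * ((α : 𝕜) • 1 + B)⁻¹

theorem re_inner_toEuclideanCLM_conjTranspose (B : Matrix ι ι 𝕜) (x : EuclideanSpace 𝕜 ι) :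
    re ⟪x, L Bᴴ x⟫_𝕜 = re ⟪x, L B x⟫_𝕜 := by
  rw [← star_eq_conjTranspose, map_star, ContinuousLinearMap.star_eq_adjoint,
    ContinuousLinearMap.adjoint_inner_right, inner_re_symm]

theorem re_inner_toEuclideanCLM_pos_of_posDef {B : Matrix ι ι 𝕜} (hB : B.PosDef)
    {x : EuclideanSpace 𝕜 ι} (hx : x ≠ 0) : 0 < re ⟪x, L B x⟫_𝕜 := by
  rw [EuclideanSpace.inner_eq_star_dotProduct, ofLp_toEuclideanCLM, dotProduct_comm]
  exact hB.re_dotProduct_pos (by simpa using hx)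

theorem re_inner_toEuclideanCLM_pos_of_posDef_hermitianPart {B : Matrix ι ι 𝕜}
    (hB : ((1 / 2 : 𝕜) • (B + Bᴴ)).PosDef) {x : EuclideanSpace 𝕜 ι} (hx : x ≠ 0) :
    0 < re ⟪x, L B x⟫_𝕜 := by
  have := re_inner_toEuclideanCLM_pos_of_posDef hB hx
  rw [map_smul, map_add, _root_.smul_apply, _root_.add_apply,
    inner_smul_right, inner_add_right, ← ofReal_ofNat, ← ofReal_one, ← ofReal_div, re_ofReal_mul,
    map_add, re_inner_toEuclideanCLM_conjTranspose] at this
  linarith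

theorem re_inner_toEuclideanCLM_eq_zero {S : Matrix ι ι 𝕜} (hS : Sᴴ = -S)
    (x : EuclideanSpace 𝕜 ι) : re ⟪x, L S x⟫_𝕜 = 0 := by
  have := re_inner_toEuclideanCLM_conjTranspose S x
  rw [hS, map_neg, _root_.neg_apply, inner_neg_right, map_neg] at this
  linarith

theorem toEuclideanCLM_ofReal_smul_one_add_apply (α : ℝ) (B : Matrix ι ι 𝕜)
    (x : EuclideanSpace 𝕜 ι) : L ((α : 𝕜) • 1 + B) x = (α : 𝕜) • x + L B x := by
  rw [map_add, map_smul, map_one]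
  rfl

theorem toEuclideanCLM_ofReal_smul_one_sub_apply (α : ℝ) (B : Matrix ι ι 𝕜)
    (x : EuclideanSpace 𝕜 ι) : L ((α : 𝕜) • 1 - B) x = (α : 𝕜) • x - L B x := by
  rw [map_sub, map_smul, map_one]
  rfl

theorem isUnit_det_ofReal_smul_one_add {α : ℝ} (hα : 0 < α) {B : Matrix ι ι 𝕜}
    (hB : ∀ x, 0 ≤ re ⟪x, L B x⟫_𝕜) : IsUnit ((α : 𝕜) • 1 + B).det := by
  rw [isUnit_iff_ne_zero, Ne, ← exists_mulVec_eq_zero_iff]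
  rintro ⟨v, hv, hBv⟩
  set x : EuclideanSpace 𝕜 ι := WithLp.toLp 2 v
  have hx : 0 < ‖x‖ := by simpa [x] using hv
  have hre : re ⟪x, L ((α : 𝕜) • 1 + B) x⟫_𝕜 = α * ‖x‖ ^ 2 + re ⟪x, L B x⟫_𝕜 := by
    rw [toEuclideanCLM_ofReal_smul_one_add_apply, inner_add_right, inner_smul_right, map_add,
      re_ofReal_mul, inner_self_eq_norm_sq]
  rw [toEuclideanCLM_toLp, hBv, WithLp.toLp_zero, inner_zero_right, map_zero] at hre
  linarith [hB x, mul_pos hα (pow_pos hx 2)]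

theorem exists_toEuclideanCLM_cayley_apply {α : ℝ} {B : Matrix ι ι 𝕜}
    (h : IsUnit ((α : 𝕜) • 1 + B).det) (y : EuclideanSpace 𝕜 ι) :
    ∃ x, y = (α : 𝕜) • x + L B x ∧ L (cayley α B) y = (α : 𝕜) • x - L B x := by
  refine ⟨L ((α : 𝕜) • 1 + B)⁻¹ y, ?_, ?_⟩
  · rw [← toEuclideanCLM_ofReal_smul_one_add_apply, ← mul_apply_eq_comp, ← map_mul,
      mul_nonsing_inv _ h, map_one, one_apply_eq_self]
  · rw [cayley, map_mul, mul_apply_eq_comp, toEuclideanCLM_ofReal_smul_one_sub_apply]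

theorem norm_cayley_le_one {α : ℝ} (hα : 0 < α) {B : Matrix ι ι 𝕜}
    (hB : ∀ x, 0 ≤ re ⟪x, L B x⟫_𝕜) : ‖cayley α B‖ ≤ 1 := by
  rw [cstar_norm_def]
  refine ContinuousLinearMap.opNorm_le_bound _ zero_le_one fun y => ?_
  obtain ⟨x, rfl, hx⟩ :=
    exists_toEuclideanCLM_cayley_apply (isUnit_det_ofReal_smul_one_add hα hB) y
  rw [hx, one_mul]
  exact norm_ofReal_smul_sub_le_norm_add hα.le (hB x)

theorem norm_cayley_lt_one {α : ℝ} (hα : 0 < α) {B : Matrix ι ι 𝕜}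
    (hB : ∀ x, x ≠ 0 → 0 < re ⟪x, L B x⟫_𝕜) : ‖cayley α B‖ < 1 := by
  have hB' : ∀ x, 0 ≤ re ⟪x, L B x⟫_𝕜 := fun x => by
    rcases eq_or_ne x 0 with rfl | hx
    · simp
    · exact (hB x hx).le
  rw [cstar_norm_def]
  refine ContinuousLinearMap.norm_lt_one_of_norm_apply_lt _ fun y hy => ?_
  obtain ⟨x, rfl, hx⟩ :=
    exists_toEuclideanCLM_cayley_apply (isUnit_det_ofReal_smul_one_add hα hB') y
  have hx0 : x ≠ 0 := by
    rintro rfl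
    simp at hy
  rw [hx]
  exact norm_ofReal_smul_sub_lt_norm_add hα (hB x hx0)

theorem spectralRadius_le_l2_opNNNorm (a : Matrix ι ι 𝕜) : spectralRadius 𝕜 a ≤ ‖a‖₊ := by
  rcases isEmpty_or_nonempty ι with hι | hι
  · simp [spectralRadius, spectrum.of_subsingleton]
  · exact spectrum.spectralRadius_le_nnnorm a

end Matrix

theorem stmt14_general {n m : ℕ}
    (P S : Fin m → Matrix (Fin n) (Fin n) ℂ) (α : Fin m → ℝ)
    (hP : ∀ k, ((1 / 2 : ℂ) • (P k + (P k)ᴴ)).PosDef)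
    (hS : ∀ k, (S k)ᴴ = -S k)
    (hα : ∀ k, 0 < α k) (k : Fin m) :
    spectralRadius ℂ
        (((α k : ℂ) • (1 : Matrix (Fin n) (Fin n) ℂ) + S k)⁻¹ *
          ((α k : ℂ) • 1 - P k) * ((α k : ℂ) • 1 + P k)⁻¹ *
          ((α k : ℂ) • 1 - S k)) ≤
      (‖((α k : ℂ) • (1 : Matrix (Fin n) (Fin n) ℂ) - P k) *
        ((α k : ℂ) • 1 + P k)⁻¹‖₊ : ENNReal) ∧
    ‖((α k : ℂ) • (1 : Matrix (Fin n) (Fin n) ℂ) - P k) *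
      ((α k : ℂ) • 1 + P k)⁻¹‖ < 1 := by
  have hT : ‖cayley (α k) (P k)‖ < 1 :=
    norm_cayley_lt_one (hα k) fun _ ↦ re_inner_toEuclideanCLM_pos_of_posDef_hermitianPart (hP k)
  have hQ : ‖cayley (α k) (S k)‖₊ ≤ 1 :=
    norm_cayley_le_one (hα k) fun x => (re_inner_toEuclideanCLM_eq_zero (hS k) x).ge
  refine ⟨?_, hT⟩
  calc _ = spectralRadius ℂ (cayley (α k) (P k) * cayley (α k) (S k)) := by
        simp only [mul_assoc]
        rw [spectralRadius_mul_comm]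
        simp only [cayley, mul_assoc]
        rfl
    _ ≤ ‖cayley (α k) (P k) * cayley (α k) (S k)‖₊ := spectralRadius_le_l2_opNNNorm _
    _ ≤ ‖cayley (α k) (P k)‖₊ := by
        gcongr
        calc _ ≤ ‖cayley (α k) (P k)‖₊ * ‖cayley (α k) (S k)‖₊ := l2_opNNNorm_mul _ _
          _ ≤ ‖cayley (α k) (P k)‖₊ := mul_le_of_le_one_right' hQ

theorem stmt14 {n m : ℕ} (A : Matrix (Fin n) (Fin n) ℂ)
    (P S : Fin m → Matrix (Fin n) (Fin n) ℂ) (α : Fin m → ℝ)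
    (hsplit : ∀ k, A = P k + S k)
    (hP : ∀ k, ((1 / 2 : ℂ) • (P k + (P k)ᴴ)).PosDef)
    (hS : ∀ k, (S k)ᴴ = -S k)
    (hα : ∀ k, 0 < α k) (k : Fin m) :
    spectralRadius ℂ
        (((α k : ℂ) • (1 : Matrix (Fin n) (Fin n) ℂ) + S k)⁻¹ *
          ((α k : ℂ) • 1 - P k) * ((α k : ℂ) • 1 + P k)⁻¹ *
          ((α k : ℂ) • 1 - S k)) ≤
      (‖((α k : ℂ) • (1 : Matrix (Fin n) (Fin n) ℂ) - P k) *
        ((α k : ℂ) • 1 + P k)⁻¹‖₊ : ENNReal) ∧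
    ‖((α k : ℂ) • (1 : Matrix (Fin n) (Fin n) ℂ) - P k) *
      ((α k : ℂ) • 1 + P k)⁻¹‖ < 1 :=
  stmt14_general P S α hP hS hα k
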